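/- arXiv:2503.03445 — 3 statements merged into one kernel-verified Lean document; each statement's English description precedes it below -/
import Mathlib

section
/- Let (B, μ, η) be a monad on a monoidal category C. There is a bijective correspondence between bimonad structures on B and monoidal structures on the Eilenberg–Moore category C^B such that the canonical forgetful functor U^B : C^B → C is strict monoidal. -/
open CategoryTheory MonoidalCategory

universe v u

namespace BimonadRecon

variable {C : Type u} [Category.{v} C] [MonoidalCategory C]

/-- A bimonad structure on a monad `B` over a monoidal category `C`: an opmonoidal
structure `(δ, ε)` on the underlying functor, for which the unit and multiplication of
the monad are opmonoidal natural transformations. -/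
structure Bimonad (B : Monad C) where
  δ : ∀ X Y : C, B.obj (X ⊗ Y) ⟶ B.obj X ⊗ B.obj Y
  ε : B.obj (𝟙_ C) ⟶ 𝟙_ C
  δ_nat : ∀ {X X' Y Y' : C} (f : X ⟶ X') (g : Y ⟶ Y'),
      B.map (f ⊗ₘ g) ≫ δ X' Y' = δ X Y ≫ (B.map f ⊗ₘ B.map g)
  δ_coassoc : ∀ X Y Z : C,
      δ (X ⊗ Y) Z ≫ (δ X Y ⊗ₘ 𝟙 (B.obj Z)) ≫ (α_ (B.obj X) (B.obj Y) (B.obj Z)).hom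
        = B.map (α_ X Y Z).hom ≫ δ X (Y ⊗ Z) ≫ (𝟙 (B.obj X) ⊗ₘ δ Y Z)
  δ_counit_l : ∀ X : C,
      δ (𝟙_ C) X ≫ (ε ⊗ₘ 𝟙 (B.obj X)) ≫ (λ_ (B.obj X)).hom = B.map (λ_ X).hom
  δ_counit_r : ∀ X : C,
      δ X (𝟙_ C) ≫ (𝟙 (B.obj X) ⊗ₘ ε) ≫ (ρ_ (B.obj X)).hom = B.map (ρ_ X).hom
  η_δ : ∀ X Y : C, B.η.app (X ⊗ Y) ≫ δ X Y = B.η.app X ⊗ₘ B.η.app Y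
  η_ε : B.η.app (𝟙_ C) ≫ ε = 𝟙 (𝟙_ C)
  μ_δ : ∀ X Y : C,
      B.μ.app (X ⊗ Y) ≫ δ X Y
        = B.map (δ X Y) ≫ δ (B.obj X) (B.obj Y) ≫ (B.μ.app X ⊗ₘ B.μ.app Y)
  μ_ε : B.μ.app (𝟙_ C) ≫ ε = B.map ε ≫ ε

/-- A monoidal structure on the Eilenberg–Moore category `Cᴮ` for which the forgetful
functor `Uᴮ : Cᴮ → C` is strict monoidal: equivalently, the data of a `B`-algebra
structure on `A₁.A ⊗ A₂.A` for each pair of algebras and on `𝟙_ C`, functorially, such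
that the associators and unitors of `C` are morphisms of algebras. -/
structure MonoidalLift (B : Monad C) where
  act : ∀ A₁ A₂ : B.Algebra, B.obj (A₁.A ⊗ A₂.A) ⟶ A₁.A ⊗ A₂.A
  actUnit : B.obj (𝟙_ C) ⟶ 𝟙_ C
  act_unit : ∀ A₁ A₂ : B.Algebra, B.η.app (A₁.A ⊗ A₂.A) ≫ act A₁ A₂ = 𝟙 (A₁.A ⊗ A₂.A)
  act_assoc : ∀ A₁ A₂ : B.Algebra,
      B.μ.app (A₁.A ⊗ A₂.A) ≫ act A₁ A₂ = B.map (act A₁ A₂) ≫ act A₁ A₂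
  actUnit_unit : B.η.app (𝟙_ C) ≫ actUnit = 𝟙 (𝟙_ C)
  actUnit_assoc : B.μ.app (𝟙_ C) ≫ actUnit = B.map actUnit ≫ actUnit
  tensor_hom : ∀ {A₁ A₂ B₁ B₂ : B.Algebra} (f : A₁ ⟶ B₁) (g : A₂ ⟶ B₂),
      B.map (f.f ⊗ₘ g.f) ≫ act B₁ B₂ = act A₁ A₂ ≫ (f.f ⊗ₘ g.f)
  assoc_hom : ∀ A₁ A₂ A₃ : B.Algebra,
      B.map (α_ A₁.A A₂.A A₃.A).hom
          ≫ act A₁ { A := A₂.A ⊗ A₃.A, a := act A₂ A₃, unit := act_unit A₂ A₃,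
                     assoc := act_assoc A₂ A₃ }
        = act { A := A₁.A ⊗ A₂.A, a := act A₁ A₂, unit := act_unit A₁ A₂,
                assoc := act_assoc A₁ A₂ } A₃
            ≫ (α_ A₁.A A₂.A A₃.A).hom
  lUnit_hom : ∀ A : B.Algebra,
      B.map (λ_ A.A).hom ≫ A.a
        = act { A := 𝟙_ C, a := actUnit, unit := actUnit_unit, assoc := actUnit_assoc } A
            ≫ (λ_ A.A).hom
  rUnit_hom : ∀ A : B.Algebra,
      B.map (ρ_ A.A).hom ≫ A.a
        = act A { A := 𝟙_ C, a := actUnit, unit := actUnit_unit, assoc := actUnit_assoc }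
            ≫ (ρ_ A.A).hom




theorem Bimonad.ext' {B : Monad C} {b1 b2 : Bimonad B} (h : ∀ X Y, b1.δ X Y = b2.δ X Y)
    (h2 : b1.ε = b2.ε) : b1 = b2 := by
  cases b1; cases b2
  simp only [Bimonad.mk.injEq]
  exact ⟨funext fun X => funext fun Y => h X Y, h2⟩

theorem MonoidalLift.ext' {B : Monad C} {m1 m2 : MonoidalLift B}
    (h : ∀ A₁ A₂, m1.act A₁ A₂ = m2.act A₁ A₂) (h2 : m1.actUnit = m2.actUnit) :
    m1 = m2 := by
  cases m1; cases m2
  simp only [MonoidalLift.mk.injEq]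
  exact ⟨funext fun A₁ => funext fun A₂ => h A₁ A₂, h2⟩

variable {B : Monad C}

/-- The forward map: a bimonad structure induces a monoidal lift. -/
def toLift (bm : Bimonad B) : MonoidalLift B where
  act A₁ A₂ := bm.δ A₁.A A₂.A ≫ (A₁.a ⊗ₘ A₂.a)
  actUnit := bm.ε
  act_unit A₁ A₂ := by
    rw [← Category.assoc, bm.η_δ, tensorHom_comp_tensorHom, A₁.unit, A₂.unit]
    exact id_tensorHom_id _ _
  act_assoc A₁ A₂ := by
    rw [← Category.assoc, bm.μ_δ]
    slice_lhs 3 4 => rw [tensorHom_comp_tensorHom, A₁.assoc, A₂.assoc, ← tensorHom_comp_tensorHom]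
    slice_lhs 2 3 => rw [← bm.δ_nat]
    simp only [Functor.map_comp, Category.assoc]
  actUnit_unit := bm.η_ε
  actUnit_assoc := bm.μ_ε
  tensor_hom {A₁ A₂ B₁ B₂} f g := by
    slice_lhs 1 2 => rw [bm.δ_nat]
    slice_lhs 2 3 => rw [tensorHom_comp_tensorHom, f.h, g.h, ← tensorHom_comp_tensorHom]
    simp only [Category.assoc]
  assoc_hom A₁ A₂ A₃ := by
    dsimp only
    have h1 : (A₁.a ⊗ₘ bm.δ A₂.A A₃.A ≫ (A₂.a ⊗ₘ A₃.a))
        = (𝟙 (B.obj A₁.A) ⊗ₘ bm.δ A₂.A A₃.A) ≫ (A₁.a ⊗ₘ (A₂.a ⊗ₘ A₃.a)) := by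
      rw [tensorHom_comp_tensorHom, Category.id_comp]
    have h2 : (bm.δ A₁.A A₂.A ≫ (A₁.a ⊗ₘ A₂.a) ⊗ₘ A₃.a)
        = (bm.δ A₁.A A₂.A ⊗ₘ 𝟙 (B.obj A₃.A)) ≫ ((A₁.a ⊗ₘ A₂.a) ⊗ₘ A₃.a) := by
      rw [tensorHom_comp_tensorHom, Category.id_comp]
    rw [h1, h2]
    slice_lhs 1 3 => rw [← bm.δ_coassoc]
    slice_lhs 3 4 => rw [← associator_naturality]
    simp only [Category.assoc]
  lUnit_hom A := by
    dsimp only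
    have h1 : (bm.ε ⊗ₘ A.a)
        = (bm.ε ⊗ₘ 𝟙 (B.obj A.A)) ≫ (𝟙 (𝟙_ C) ⊗ₘ A.a) := by
      rw [tensorHom_comp_tensorHom, Category.comp_id, Category.id_comp]
    have h2 : (𝟙 (𝟙_ C) ⊗ₘ A.a) ≫ (λ_ A.A).hom = (λ_ (B.obj A.A)).hom ≫ A.a := by
      rw [id_tensorHom, leftUnitor_naturality] <;> try rfl
    rw [h1, ← bm.δ_counit_l A.A]
    simp only [Category.assoc, h2]
  rUnit_hom A := by
    dsimp only
    have h1 : (A.a ⊗ₘ bm.ε)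
        = (𝟙 (B.obj A.A) ⊗ₘ bm.ε) ≫ (A.a ⊗ₘ 𝟙 (𝟙_ C)) := by
      rw [tensorHom_comp_tensorHom, Category.comp_id, Category.id_comp]
    have h2 : (A.a ⊗ₘ 𝟙 (𝟙_ C)) ≫ (ρ_ A.A).hom = (ρ_ (B.obj A.A)).hom ≫ A.a := by
      rw [tensorHom_id, rightUnitor_naturality] <;> try rfl
    rw [h1, ← bm.δ_counit_r A.A]
    simp only [Category.assoc, h2]

namespace MonoidalLift

variable (ml : MonoidalLift B)

/-- The tensor product algebra coming from a monoidal lift. -/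
def tensorAlg (A₁ A₂ : B.Algebra) : B.Algebra where
  A := A₁.A ⊗ A₂.A
  a := ml.act A₁ A₂
  unit := ml.act_unit A₁ A₂
  assoc := ml.act_assoc A₁ A₂

/-- The unit algebra coming from a monoidal lift. -/
def unitAlg : B.Algebra where
  A := 𝟙_ C
  a := ml.actUnit
  unit := ml.actUnit_unit
  assoc := ml.actUnit_assoc

/-- The comultiplication extracted from a monoidal lift. -/
def δ' (X Y : C) : B.obj (X ⊗ Y) ⟶ B.obj X ⊗ B.obj Y :=
  B.map (B.η.app X ⊗ₘ B.η.app Y) ≫ ml.act (B.free.obj X) (B.free.obj Y)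

/-- The algebra action, as a morphism of algebras from the free algebra. -/
def actionHom (A : B.Algebra) : B.free.obj A.A ⟶ A :=
  { f := A.a, h := A.assoc.symm }

theorem act_free_comp (A₁ A₂ : B.Algebra) :
    ml.act (B.free.obj A₁.A) (B.free.obj A₂.A) ≫ (A₁.a ⊗ₘ A₂.a)
      = B.map (A₁.a ⊗ₘ A₂.a) ≫ ml.act A₁ A₂ :=
  (ml.tensor_hom (actionHom A₁) (actionHom A₂)).symm

theorem act_free_unit (X Y : C) :
    B.η.app (B.obj X ⊗ B.obj Y) ≫ ml.act (B.free.obj X) (B.free.obj Y)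
      = 𝟙 (B.obj X ⊗ B.obj Y) :=
  ml.act_unit (B.free.obj X) (B.free.obj Y)

theorem act_free_assoc (X Y : C) :
    B.μ.app (B.obj X ⊗ B.obj Y) ≫ ml.act (B.free.obj X) (B.free.obj Y)
      = B.map (ml.act (B.free.obj X) (B.free.obj Y))
          ≫ ml.act (B.free.obj X) (B.free.obj Y) :=
  ml.act_assoc (B.free.obj X) (B.free.obj Y)

theorem δ'_algHom_aux (X Y : C) :
    B.map (ml.δ' X Y) ≫ ml.act (B.free.obj X) (B.free.obj Y)
      = B.μ.app (X ⊗ Y) ≫ ml.δ' X Y := by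
  have hnat : B.map (B.map (B.η.app X ⊗ₘ B.η.app Y)) ≫ B.μ.app (B.obj X ⊗ B.obj Y)
      = B.μ.app (X ⊗ Y) ≫ B.map (B.η.app X ⊗ₘ B.η.app Y) :=
    B.μ.naturality (B.η.app X ⊗ₘ B.η.app Y)
  dsimp only [δ']
  erw [Functor.map_comp, Category.assoc, ← ml.act_free_assoc, ← Category.assoc,
    hnat, Category.assoc]
  rfl

/-- `δ'` as a morphism of algebras. -/
def δ'Hom (X Y : C) :
    B.free.obj (X ⊗ Y) ⟶ ml.tensorAlg (B.free.obj X) (B.free.obj Y) :=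
  { f := ml.δ' X Y, h := ml.δ'_algHom_aux X Y }

/-- `actUnit` as a morphism of algebras. -/
def εHom : B.free.obj (𝟙_ C) ⟶ ml.unitAlg :=
  { f := ml.actUnit, h := ml.actUnit_assoc.symm }

theorem δ'_nat {X X' Y Y' : C} (f : X ⟶ X') (g : Y ⟶ Y') :
    B.map (f ⊗ₘ g) ≫ ml.δ' X' Y' = ml.δ' X Y ≫ (B.map f ⊗ₘ B.map g) := by
  have hf : f ≫ B.η.app X' = B.η.app X ≫ B.map f := B.η.naturality f
  have hg : g ≫ B.η.app Y' = B.η.app Y ≫ B.map g := B.η.naturality g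
  have ht : B.map (B.map f ⊗ₘ B.map g) ≫ ml.act (B.free.obj X') (B.free.obj Y')
      = ml.act (B.free.obj X) (B.free.obj Y) ≫ (B.map f ⊗ₘ B.map g) :=
    ml.tensor_hom (B.free.map f) (B.free.map g)
  dsimp only [δ']
  erw [← Category.assoc, ← Functor.map_comp, tensorHom_comp_tensorHom, hf, hg, ← tensorHom_comp_tensorHom,
    Functor.map_comp, Category.assoc, ht, ← Category.assoc]
  rfl

theorem δ'_η (X Y : C) :
    B.η.app (X ⊗ Y) ≫ ml.δ' X Y = B.η.app X ⊗ₘ B.η.app Y := by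
  have hnat : B.η.app (X ⊗ Y) ≫ B.map (B.η.app X ⊗ₘ B.η.app Y)
      = (B.η.app X ⊗ₘ B.η.app Y) ≫ B.η.app (B.obj X ⊗ B.obj Y) :=
    (B.η.naturality (B.η.app X ⊗ₘ B.η.app Y)).symm
  dsimp only [δ']
  erw [← Category.assoc, hnat, Category.assoc, ml.act_free_unit, Category.comp_id]

theorem δ'_μ (X Y : C) :
    B.μ.app (X ⊗ Y) ≫ ml.δ' X Y
      = B.map (ml.δ' X Y) ≫ ml.δ' (B.obj X) (B.obj Y) ≫ (B.μ.app X ⊗ₘ B.μ.app Y) := by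
  have hμ : ml.act (B.free.obj (B.obj X)) (B.free.obj (B.obj Y))
        ≫ (B.μ.app X ⊗ₘ B.μ.app Y)
      = B.map (B.μ.app X ⊗ₘ B.μ.app Y) ≫ ml.act (B.free.obj X) (B.free.obj Y) :=
    (ml.tensor_hom (actionHom (B.free.obj X)) (actionHom (B.free.obj Y))).symm
  have hid : (𝟙 (B.obj X) ⊗ₘ 𝟙 (B.obj Y)) = 𝟙 (B.obj X ⊗ B.obj Y) := id_tensorHom_id _ _
  have e0 : ml.δ' (B.obj X) (B.obj Y) ≫ (B.μ.app X ⊗ₘ B.μ.app Y)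
      = ml.act (B.free.obj X) (B.free.obj Y) := by
    dsimp only [δ']
    erw [Category.assoc, hμ, ← Category.assoc, ← Functor.map_comp, tensorHom_comp_tensorHom,
      B.left_unit, B.left_unit]
    simp
    exact Category.id_comp _
  rw [← ml.δ'_algHom_aux, e0]
  rfl

theorem δ'_coassoc (X Y Z : C) :
    ml.δ' (X ⊗ Y) Z ≫ (ml.δ' X Y ⊗ₘ 𝟙 (B.obj Z)) ≫ (α_ (B.obj X) (B.obj Y) (B.obj Z)).hom
      = B.map (α_ X Y Z).hom ≫ ml.δ' X (Y ⊗ Z) ≫ (𝟙 (B.obj X) ⊗ₘ ml.δ' Y Z) := by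
  have hassoc : B.map (α_ (B.obj X) (B.obj Y) (B.obj Z)).hom
        ≫ ml.act (B.free.obj X) (ml.tensorAlg (B.free.obj Y) (B.free.obj Z))
      = ml.act (ml.tensorAlg (B.free.obj X) (B.free.obj Y)) (B.free.obj Z)
          ≫ (α_ (B.obj X) (B.obj Y) (B.obj Z)).hom :=
    ml.assoc_hom (B.free.obj X) (B.free.obj Y) (B.free.obj Z)
  have h1 : ml.act (B.free.obj (X ⊗ Y)) (B.free.obj Z) ≫ (ml.δ' X Y ⊗ₘ 𝟙 (B.obj Z))
      = B.map (ml.δ' X Y ⊗ₘ 𝟙 (B.obj Z))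
          ≫ ml.act (ml.tensorAlg (B.free.obj X) (B.free.obj Y)) (B.free.obj Z) :=
    (ml.tensor_hom (ml.δ'Hom X Y) (𝟙 (B.free.obj Z))).symm
  have h2 : ml.act (B.free.obj X) (B.free.obj (Y ⊗ Z)) ≫ (𝟙 (B.obj X) ⊗ₘ ml.δ' Y Z)
      = B.map (𝟙 (B.obj X) ⊗ₘ ml.δ' Y Z)
          ≫ ml.act (B.free.obj X) (ml.tensorAlg (B.free.obj Y) (B.free.obj Z)) :=
    (ml.tensor_hom (𝟙 (B.free.obj X)) (ml.δ'Hom Y Z)).symm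
  have u1 : ml.δ' (X ⊗ Y) Z
      = B.map (B.η.app (X ⊗ Y) ⊗ₘ B.η.app Z)
          ≫ ml.act (B.free.obj (X ⊗ Y)) (B.free.obj Z) := rfl
  have u2 : ml.δ' X (Y ⊗ Z)
      = B.map (B.η.app X ⊗ₘ B.η.app (Y ⊗ Z))
          ≫ ml.act (B.free.obj X) (B.free.obj (Y ⊗ Z)) := rfl
  calc ml.δ' (X ⊗ Y) Z ≫ (ml.δ' X Y ⊗ₘ 𝟙 (B.obj Z)) ≫ (α_ (B.obj X) (B.obj Y) (B.obj Z)).hom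
      = (B.map ((B.η.app (X ⊗ Y) ≫ ml.δ' X Y) ⊗ₘ B.η.app Z)
          ≫ ml.act (ml.tensorAlg (B.free.obj X) (B.free.obj Y)) (B.free.obj Z)
          ≫ (α_ (B.obj X) (B.obj Y) (B.obj Z)).hom :
            B.obj ((X ⊗ Y) ⊗ Z) ⟶ B.obj X ⊗ (B.obj Y ⊗ B.obj Z)) := by
        erw [u1, Category.assoc, ← Category.assoc (ml.act _ _), h1,
          ← Category.assoc, ← Category.assoc, ← Functor.map_comp, tensorHom_comp_tensorHom,
          Category.comp_id, Category.assoc]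
        rfl
    _ = (B.map ((B.η.app X ⊗ₘ B.η.app Y) ⊗ₘ B.η.app Z)
          ≫ B.map (α_ (B.obj X) (B.obj Y) (B.obj Z)).hom
          ≫ ml.act (B.free.obj X) (ml.tensorAlg (B.free.obj Y) (B.free.obj Z)) :
            B.obj ((X ⊗ Y) ⊗ Z) ⟶ B.obj X ⊗ (B.obj Y ⊗ B.obj Z)) := by
        erw [ml.δ'_η, hassoc]
        rfl
    _ = (B.map (α_ X Y Z).hom ≫ B.map (B.η.app X ⊗ₘ (B.η.app Y ⊗ₘ B.η.app Z))
          ≫ ml.act (B.free.obj X) (ml.tensorAlg (B.free.obj Y) (B.free.obj Z)) :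
            B.obj ((X ⊗ Y) ⊗ Z) ⟶ B.obj X ⊗ (B.obj Y ⊗ B.obj Z)) := by
        erw [← Category.assoc, ← Functor.map_comp, associator_naturality,
          Functor.map_comp, Category.assoc]
    _ = B.map (α_ X Y Z).hom ≫ ml.δ' X (Y ⊗ Z) ≫ (𝟙 (B.obj X) ⊗ₘ ml.δ' Y Z) := by
        erw [u2, Category.assoc, h2, ← Category.assoc (B.map (B.η.app X ⊗ₘ B.η.app (Y ⊗ Z))),
          ← Functor.map_comp, tensorHom_comp_tensorHom, Category.comp_id, ml.δ'_η]

theorem δ'_counit_l (X : C) :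
    ml.δ' (𝟙_ C) X ≫ (ml.actUnit ⊗ₘ 𝟙 (B.obj X)) ≫ (λ_ (B.obj X)).hom
      = B.map (λ_ X).hom := by
  have h1 : ml.act (B.free.obj (𝟙_ C)) (B.free.obj X) ≫ (ml.actUnit ⊗ₘ 𝟙 (B.obj X))
      = B.map (ml.actUnit ⊗ₘ 𝟙 (B.obj X)) ≫ ml.act ml.unitAlg (B.free.obj X) :=
    (ml.tensor_hom ml.εHom (𝟙 (B.free.obj X))).symm
  have hl : ml.act ml.unitAlg (B.free.obj X) ≫ (λ_ (B.obj X)).hom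
      = B.map (λ_ (B.obj X)).hom ≫ B.μ.app X := (ml.lUnit_hom (B.free.obj X)).symm
  have hnat : (𝟙 (𝟙_ C) ⊗ₘ B.η.app X) ≫ (λ_ (B.obj X)).hom
      = (λ_ X).hom ≫ B.η.app X := by
    rw [id_tensorHom, leftUnitor_naturality] <;> try rfl
  dsimp only [δ']
  erw [Category.assoc, ← Category.assoc (ml.act _ _), h1, ← Category.assoc,
    ← Category.assoc, ← Functor.map_comp, tensorHom_comp_tensorHom, ml.actUnit_unit,
    Category.comp_id, Category.assoc, hl,
    ← Category.assoc, ← Functor.map_comp, hnat, Functor.map_comp,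
    Category.assoc, B.right_unit]
  exact Category.comp_id _

theorem δ'_counit_r (X : C) :
    ml.δ' X (𝟙_ C) ≫ (𝟙 (B.obj X) ⊗ₘ ml.actUnit) ≫ (ρ_ (B.obj X)).hom
      = B.map (ρ_ X).hom := by
  have h1 : ml.act (B.free.obj X) (B.free.obj (𝟙_ C)) ≫ (𝟙 (B.obj X) ⊗ₘ ml.actUnit)
      = B.map (𝟙 (B.obj X) ⊗ₘ ml.actUnit) ≫ ml.act (B.free.obj X) ml.unitAlg :=
    (ml.tensor_hom (𝟙 (B.free.obj X)) ml.εHom).symm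
  have hr : ml.act (B.free.obj X) ml.unitAlg ≫ (ρ_ (B.obj X)).hom
      = B.map (ρ_ (B.obj X)).hom ≫ B.μ.app X := (ml.rUnit_hom (B.free.obj X)).symm
  have hnat : (B.η.app X ⊗ₘ 𝟙 (𝟙_ C)) ≫ (ρ_ (B.obj X)).hom
      = (ρ_ X).hom ≫ B.η.app X := by
    rw [tensorHom_id, rightUnitor_naturality] <;> try rfl
  dsimp only [δ']
  erw [Category.assoc, ← Category.assoc (ml.act _ _), h1, ← Category.assoc,
    ← Category.assoc, ← Functor.map_comp, tensorHom_comp_tensorHom, ml.actUnit_unit,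
    Category.comp_id, Category.assoc, hr,
    ← Category.assoc, ← Functor.map_comp, hnat, Functor.map_comp,
    Category.assoc, B.right_unit]
  exact Category.comp_id _

end MonoidalLift

/-- The backward map: a monoidal lift induces a bimonad structure. -/
def ofLift (ml : MonoidalLift B) : Bimonad B where
  δ := ml.δ'
  ε := ml.actUnit
  δ_nat := ml.δ'_nat
  δ_coassoc := ml.δ'_coassoc
  δ_counit_l := ml.δ'_counit_l
  δ_counit_r := ml.δ'_counit_r
  η_δ := ml.δ'_η
  η_ε := ml.actUnit_unit
  μ_δ := ml.δ'_μ
  μ_ε := ml.actUnit_assoc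

theorem ofLift_toLift (bm : Bimonad B) : ofLift (toLift bm) = bm := by
  refine Bimonad.ext' (fun X Y => ?_) rfl
  have hid : (𝟙 (B.obj X) ⊗ₘ 𝟙 (B.obj Y)) = 𝟙 (B.obj X ⊗ B.obj Y) := id_tensorHom_id _ _
  show B.map (B.η.app X ⊗ₘ B.η.app Y)
      ≫ (bm.δ (B.obj X) (B.obj Y) ≫ (B.μ.app X ⊗ₘ B.μ.app Y)) = bm.δ X Y
  rw [← Category.assoc, bm.δ_nat, Category.assoc, tensorHom_comp_tensorHom,
    B.right_unit, B.right_unit]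
  simp

theorem toLift_ofLift (ml : MonoidalLift B) : toLift (ofLift ml) = ml := by
  refine MonoidalLift.ext' (fun A₁ A₂ => ?_) rfl
  have hid : (𝟙 A₁.A ⊗ₘ 𝟙 A₂.A) = 𝟙 (A₁.A ⊗ A₂.A) := id_tensorHom_id _ _
  show (B.map (B.η.app A₁.A ⊗ₘ B.η.app A₂.A)
      ≫ ml.act (B.free.obj A₁.A) (B.free.obj A₂.A)) ≫ (A₁.a ⊗ₘ A₂.a) = ml.act A₁ A₂
  erw [Category.assoc, ml.act_free_comp, ← Category.assoc, ← Functor.map_comp,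
    tensorHom_comp_tensorHom, A₁.unit, A₂.unit, hid]
  simp

/-- **Statement 5 (Moerdijk, McCrudden).**  For a monad `B` on a monoidal category `C`
there is a bijective correspondence between bimonad structures on `B` and monoidal
structures on the Eilenberg–Moore category `Cᴮ` for which the canonical forgetful functor
`Uᴮ : Cᴮ → C` is strict monoidal; the forward map endows `A₁ ⊗ A₂` with the action
`δ ≫ (A₁.a ⊗ A₂.a)` and the unit `𝟙_ C` with the action `ε`. -/
theorem bimonad_equiv_monoidalLift (B : Monad C) :
    ∃ e : Bimonad B ≃ MonoidalLift B,
      (∀ (bm : Bimonad B) (A₁ A₂ : B.Algebra),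
          (e bm).act A₁ A₂ = bm.δ A₁.A A₂.A ≫ (A₁.a ⊗ₘ A₂.a))
        ∧ (∀ bm : Bimonad B, (e bm).actUnit = bm.ε) := by
  refine ⟨⟨toLift, ofLift, ofLift_toLift, toLift_ofLift⟩,
    fun bm A₁ A₂ => rfl, fun bm => rfl⟩

end BimonadRecon
end

section
/- Let (C, ⊗, 1) be a braided monoidal category with braiding σ, viewed as the duoidal category (C, ⊗, 1, ⊗, 1) induced by the braiding. Let B be a bimonad on (C, ⊗, 1) with opmonoidal structure (B₂, B₀) satisfying B₂_{y,x} ∘ Bσ_{x,y} = σ_{Bx,By} ∘ B₂_{x,y} for all objects x, y. Then B, with both of its opmonoidal structures taken equal to (B₂, B₀), is a double opmonoidal monad on (C, ⊗, 1, ⊗, 1). -/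
open CategoryTheory MonoidalCategory

universe v u

namespace BimonadRecon

variable {C : Type u} [Category.{v} C] [MonoidalCategory C]

lemma coassoc_inv {B : Monad C} (bm : Bimonad B) (X Y Z : C) :
    B.map (α_ X Y Z).inv ≫ bm.δ (X ⊗ Y) Z ≫ (bm.δ X Y ⊗ₘ 𝟙 (B.obj Z))
      = bm.δ X (Y ⊗ Z) ≫ (𝟙 (B.obj X) ⊗ₘ bm.δ Y Z) ≫ (α_ (B.obj X) (B.obj Y) (B.obj Z)).inv := by
  rw [← cancel_mono (α_ (B.obj X) (B.obj Y) (B.obj Z)).hom]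
  simp only [Category.assoc, Iso.inv_hom_id, Category.comp_id]
  rw [bm.δ_coassoc, ← B.map_comp_assoc, Iso.inv_hom_id, B.map_id, Category.id_comp]

/-- The interchange law on a braided monoidal category, obtained by conjugating
`a ⊗ σ_{b,c} ⊗ d` with associators. -/
def zbr [BraidedCategory C] (a b c d : C) : (a ⊗ b) ⊗ (c ⊗ d) ⟶ (a ⊗ c) ⊗ (b ⊗ d) :=
  (α_ a b (c ⊗ d)).hom ≫ (𝟙 a ⊗ₘ (α_ b c d).inv) ≫ (𝟙 a ⊗ₘ ((β_ b c).hom ⊗ₘ 𝟙 d))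
    ≫ (𝟙 a ⊗ₘ (α_ c b d).hom) ≫ (α_ a c (b ⊗ d)).inv

/-- **Statement 15.** Let `(C, ⊗, 1, σ)` be a braided monoidal category, seen as the
duoidal category `(C, ⊗, 1, ⊗, 1)` with interchange law `ζ` built from the braiding,
`ϖ = λ_1`, `ν = λ_1⁻¹`, `ι = id`.  A bimonad `B` on `C` whose opmonoidal structure
satisfies `B₂ ∘ Bσ = σ ∘ B₂` is a double opmonoidal monad on `(C, ⊗, 1, ⊗, 1)`, with both
opmonoidal structures equal to `(B₂, B₀)`: conditions (i)–(iv) hold. -/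
theorem braided_bimonad_doubleOpmonoidal [BraidedCategory C] (B : Monad C)
    (bm : Bimonad B)
    (hσ : ∀ x y : C, B.map (β_ x y).hom ≫ bm.δ y x = bm.δ x y ≫ (β_ (B.obj x) (B.obj y)).hom) :
    (B.map (λ_ (𝟙_ C)).hom ≫ bm.ε
        = bm.δ (𝟙_ C) (𝟙_ C) ≫ (bm.ε ⊗ₘ bm.ε) ≫ (λ_ (𝟙_ C)).hom)
      ∧ (B.map (λ_ (𝟙_ C)).inv ≫ bm.δ (𝟙_ C) (𝟙_ C) ≫ (bm.ε ⊗ₘ bm.ε)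
        = bm.ε ≫ (λ_ (𝟙_ C)).inv)
      ∧ (B.map (𝟙 (𝟙_ C)) ≫ bm.ε = bm.ε ≫ 𝟙 (𝟙_ C))
      ∧ (∀ a b c d : C,
          B.map (zbr a b c d) ≫ bm.δ (a ⊗ c) (b ⊗ d) ≫ (bm.δ a c ⊗ₘ bm.δ b d)
            = bm.δ (a ⊗ b) (c ⊗ d) ≫ (bm.δ a b ⊗ₘ bm.δ c d)
                ≫ zbr (B.obj a) (B.obj b) (B.obj c) (B.obj d)) := by
  have h1 : B.map (λ_ (𝟙_ C)).hom ≫ bm.ε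
      = bm.δ (𝟙_ C) (𝟙_ C) ≫ (bm.ε ⊗ₘ bm.ε) ≫ (λ_ (𝟙_ C)).hom := by
    have hs : (bm.ε ⊗ₘ bm.ε) = (bm.ε ⊗ₘ 𝟙 (B.obj (𝟙_ C))) ≫ (𝟙 (𝟙_ C) ⊗ₘ bm.ε) := by
      rw [tensorHom_comp_tensorHom, Category.comp_id, Category.id_comp]
    rw [hs, ← bm.δ_counit_l (𝟙_ C)]
    simp only [Category.assoc]
    congr 2
    rw [id_tensorHom, leftUnitor_naturality]
  refine ⟨h1, ?_, by simp, fun a b c d => ?_⟩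
  · rw [← cancel_mono (λ_ (𝟙_ C)).hom]
    simp only [Category.assoc, Iso.inv_hom_id, Category.comp_id]
    rw [← h1, ← B.map_comp_assoc, Iso.inv_hom_id, B.map_id, Category.id_comp]
  · have hsplit : ∀ {P Q R S : C} (f : P ⟶ Q) (g : R ⟶ S),
        (f ⊗ₘ g) = (f ⊗ₘ 𝟙 R) ≫ (𝟙 Q ⊗ₘ g) := by
      intro P Q R S f g; rw [tensorHom_comp_tensorHom, Category.comp_id, Category.id_comp]
    rw [zbr, zbr]
    simp only [Functor.map_comp, Category.assoc]
    rw [hsplit (bm.δ a c) (bm.δ b d), hsplit (bm.δ a b) (bm.δ c d)]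
    rw [reassoc_of% (coassoc_inv bm a c (b ⊗ d))]
    have e1 : (α_ (B.obj a) (B.obj c) (B.obj (b ⊗ d))).inv
          ≫ (𝟙 (B.obj a ⊗ B.obj c) ⊗ₘ bm.δ b d)
        = (𝟙 (B.obj a) ⊗ₘ (𝟙 (B.obj c) ⊗ₘ bm.δ b d))
          ≫ (α_ (B.obj a) (B.obj c) (B.obj b ⊗ B.obj d)).inv := by
      rw [← id_tensorHom_id, ← associator_inv_naturality]
    rw [e1]
    rw [← id_tensor_comp_assoc (bm.δ c (b ⊗ d)) (𝟙 (B.obj c) ⊗ₘ bm.δ b d)]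
    rw [reassoc_of% (bm.δ_nat (𝟙 a) (α_ c b d).hom), B.map_id]
    rw [← id_tensor_comp_assoc (B.map (α_ c b d).hom)
      (bm.δ c (b ⊗ d) ≫ (𝟙 (B.obj c) ⊗ₘ bm.δ b d))]
    rw [← bm.δ_coassoc c b d]
    rw [reassoc_of% (bm.δ_nat (𝟙 a) ((β_ b c).hom ⊗ₘ 𝟙 d)), B.map_id]
    rw [← id_tensor_comp_assoc (B.map ((β_ b c).hom ⊗ₘ 𝟙 d))
      (bm.δ (c ⊗ b) d ≫ (bm.δ c b ⊗ₘ 𝟙 (B.obj d)) ≫ (α_ (B.obj c) (B.obj b) (B.obj d)).hom)]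
    have e2 : B.map ((β_ b c).hom ⊗ₘ 𝟙 d) ≫ bm.δ (c ⊗ b) d ≫ (bm.δ c b ⊗ₘ 𝟙 (B.obj d))
          ≫ (α_ (B.obj c) (B.obj b) (B.obj d)).hom
        = bm.δ (b ⊗ c) d ≫ (bm.δ b c ⊗ₘ 𝟙 (B.obj d))
            ≫ ((β_ (B.obj b) (B.obj c)).hom ⊗ₘ 𝟙 (B.obj d))
            ≫ (α_ (B.obj c) (B.obj b) (B.obj d)).hom := by
      rw [reassoc_of% (bm.δ_nat (β_ b c).hom (𝟙 d)), B.map_id]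
      rw [← comp_tensor_id_assoc, hσ, comp_tensor_id_assoc]
    rw [e2]
    rw [reassoc_of% (bm.δ_nat (𝟙 a) (α_ b c d).inv), B.map_id]
    rw [← id_tensor_comp_assoc (B.map (α_ b c d).inv)
      (bm.δ (b ⊗ c) d ≫ (bm.δ b c ⊗ₘ 𝟙 (B.obj d))
        ≫ ((β_ (B.obj b) (B.obj c)).hom ⊗ₘ 𝟙 (B.obj d))
        ≫ (α_ (B.obj c) (B.obj b) (B.obj d)).hom)]
    rw [reassoc_of% (coassoc_inv bm b c d)]
    rw [id_tensor_comp_assoc (bm.δ b (c ⊗ d))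
      ((𝟙 (B.obj b) ⊗ₘ bm.δ c d) ≫ (α_ (B.obj b) (B.obj c) (B.obj d)).inv
        ≫ ((β_ (B.obj b) (B.obj c)).hom ⊗ₘ 𝟙 (B.obj d))
        ≫ (α_ (B.obj c) (B.obj b) (B.obj d)).hom)]
    rw [← reassoc_of% (bm.δ_coassoc a b (c ⊗ d))]
    conv_rhs => rw [Category.assoc, id_tensor_associator_naturality_assoc]
    simp only [id_tensor_comp, Category.assoc]


end BimonadRecon
end

section
/- Let (C, ⊗, 1) be a strict monoidal category and B a bimonad on C with opmonoidal structure (B₂, B₀). Suppose R = {R_{b,c} : b ⊗ c → Bc ⊗ Bb} is a natural transformation satisfying (μ_c ⊗ μ_b) ∘ B₂_{Bc,Bb} ∘ BR_{b,c} = (μ_c ⊗ μ_b) ∘ R_{Bb,Bc} ∘ B₂_{b,c} : B(b ⊗ c) → Bc ⊗ Bb. Define S_{a,b,c,d} := η_a ⊗ R_{b,c} ⊗ η_d : a ⊗ b ⊗ c ⊗ d → Ba ⊗ Bc ⊗ Bb ⊗ Bd. Then S satisfies the R-matrix lifting diagram: ((μ_a ⊗ μ_c) ⊗ (μ_b ⊗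 μ_d)) ∘ (B₂ ⊗ B₂) ∘ B₂ ∘ BS_{a,b,c,d} = ((μ_a ⊗ μ_c) ⊗ (μ_b ⊗ μ_d)) ∘ S_{Ba,Bb,Bc,Bd} ∘ (B₂ ⊗ B₂) ∘ B₂ : B(a ⊗ b ⊗ c ⊗ d) → Ba ⊗ Bc ⊗ Bb ⊗ Bd. -/
open CategoryTheory

universe v u

namespace StrictDuo

variable {C : Type u} [Category.{v} C]

/-- A strict monoidal structure on a category, given as data: the tensor product is
strictly associative and strictly unital, and the coherence isomorphisms are identities
(`eqToHom`s of the strictness equations). -/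
structure StrictMonStr (C : Type u) [Category.{v} C] where
  ten : C → C → C
  unit : C
  tHom : ∀ {X₁ Y₁ X₂ Y₂ : C}, (X₁ ⟶ Y₁) → (X₂ ⟶ Y₂) → (ten X₁ X₂ ⟶ ten Y₁ Y₂)
  tHom_id : ∀ (X Y : C), tHom (𝟙 X) (𝟙 Y) = 𝟙 (ten X Y)
  tHom_comp :
    ∀ {X₁ Y₁ Z₁ X₂ Y₂ Z₂ : C} (f₁ : X₁ ⟶ Y₁) (g₁ : Y₁ ⟶ Z₁) (f₂ : X₂ ⟶ Y₂) (g₂ : Y₂ ⟶ Z₂),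
      tHom (f₁ ≫ g₁) (f₂ ≫ g₂) = tHom f₁ f₂ ≫ tHom g₁ g₂
  ten_assoc : ∀ X Y Z : C, ten (ten X Y) Z = ten X (ten Y Z)
  ten_lunit : ∀ X : C, ten unit X = X
  ten_runit : ∀ X : C, ten X unit = X
  assoc_coh : ∀ {X₁ Y₁ X₂ Y₂ X₃ Y₃ : C} (f₁ : X₁ ⟶ Y₁) (f₂ : X₂ ⟶ Y₂) (f₃ : X₃ ⟶ Y₃),
      tHom (tHom f₁ f₂) f₃
        = eqToHom (ten_assoc X₁ X₂ X₃) ≫ tHom f₁ (tHom f₂ f₃)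
            ≫ eqToHom (ten_assoc Y₁ Y₂ Y₃).symm
  lunit_coh : ∀ {X Y : C} (f : X ⟶ Y),
      tHom (𝟙 unit) f = eqToHom (ten_lunit X) ≫ f ≫ eqToHom (ten_lunit Y).symm
  runit_coh : ∀ {X Y : C} (f : X ⟶ Y),
      tHom f (𝟙 unit) = eqToHom (ten_runit X) ≫ f ≫ eqToHom (ten_runit Y).symm

/-- A bimonad structure on a monad `B` with respect to a strict monoidal structure `M`. -/
structure StrictOpmon (M : StrictMonStr C) (B : CategoryTheory.Monad C) where
  δ : ∀ X Y : C, B.obj (M.ten X Y) ⟶ M.ten (B.obj X) (B.obj Y)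
  ε : B.obj M.unit ⟶ M.unit
  δ_nat : ∀ {X X' Y Y' : C} (f : X ⟶ X') (g : Y ⟶ Y'),
      B.map (M.tHom f g) ≫ δ X' Y' = δ X Y ≫ M.tHom (B.map f) (B.map g)
  δ_coassoc : ∀ X Y Z : C,
      δ (M.ten X Y) Z ≫ M.tHom (δ X Y) (𝟙 (B.obj Z))
          ≫ eqToHom (M.ten_assoc (B.obj X) (B.obj Y) (B.obj Z))
        = B.map (eqToHom (M.ten_assoc X Y Z)) ≫ δ X (M.ten Y Z)
            ≫ M.tHom (𝟙 (B.obj X)) (δ Y Z)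
  δ_counit_l : ∀ X : C,
      δ M.unit X ≫ M.tHom ε (𝟙 (B.obj X)) ≫ eqToHom (M.ten_lunit (B.obj X))
        = B.map (eqToHom (M.ten_lunit X))
  δ_counit_r : ∀ X : C,
      δ X M.unit ≫ M.tHom (𝟙 (B.obj X)) ε ≫ eqToHom (M.ten_runit (B.obj X))
        = B.map (eqToHom (M.ten_runit X))
  η_δ : ∀ X Y : C, B.η.app (M.ten X Y) ≫ δ X Y = M.tHom (B.η.app X) (B.η.app Y)
  η_ε : B.η.app M.unit ≫ ε = 𝟙 M.unit
  μ_δ : ∀ X Y : C,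
      B.μ.app (M.ten X Y) ≫ δ X Y
        = B.map (δ X Y) ≫ δ (B.obj X) (B.obj Y) ≫ M.tHom (B.μ.app X) (B.μ.app Y)
  μ_ε : B.μ.app M.unit ≫ ε = B.map ε ≫ ε

end StrictDuo

namespace StrictDuo

variable {C : Type u} [Category.{v} C]

/-- The candidate duoidal R-matrix `S_{a,b,c,d} = η_a ⊗ R_{b,c} ⊗ η_d` built from an
R-matrix `R` on a bimonad over a strict monoidal category, as a map
`(a ⊗ b) ⊗ (c ⊗ d) ⟶ (Ba ⊗ Bc) ⊗ (Bb ⊗ Bd)` (regrouping by strictness). -/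
def Smap (M : StrictMonStr C) (B : CategoryTheory.Monad C)
    (R : ∀ b c : C, M.ten b c ⟶ M.ten (B.obj c) (B.obj b)) (a b c d : C) :
    M.ten (M.ten a b) (M.ten c d)
      ⟶ M.ten (M.ten (B.obj a) (B.obj c)) (M.ten (B.obj b) (B.obj d)) :=
  eqToHom ((M.ten_assoc a b (M.ten c d)).trans
      (congrArg (M.ten a) (M.ten_assoc b c d).symm))
    ≫ M.tHom (B.η.app a) (M.tHom (R b c) (B.η.app d))
    ≫ eqToHom ((congrArg (M.ten (B.obj a))
        (M.ten_assoc (B.obj c) (B.obj b) (B.obj d))).trans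
          (M.ten_assoc (B.obj a) (B.obj c) (M.ten (B.obj b) (B.obj d))).symm)


section Helpers

variable (M : StrictMonStr C) {B : CategoryTheory.Monad C} (bm : StrictOpmon M B)

lemma tHom_eq_eq {X X' Y Y' : C} (h : X = X') (h' : Y = Y') :
    M.tHom (eqToHom h) (eqToHom h') = eqToHom (by rw [h, h']) := by
  subst h; subst h'; simp [M.tHom_id]

lemma tHom_id_eq {Z X Y : C} (h : X = Y) :
    M.tHom (𝟙 Z) (eqToHom h) = eqToHom (by rw [h]) := by
  subst h; simp [M.tHom_id]

lemma tHom_eq_id {Z X Y : C} (h : X = Y) :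
    M.tHom (eqToHom h) (𝟙 Z) = eqToHom (by rw [h]) := by
  subst h; simp [M.tHom_id]

lemma tHom_split {X1 Y1 X2 Y2 : C} (f : X1 ⟶ Y1) (g : X2 ⟶ Y2) :
    M.tHom f g = M.tHom f (𝟙 X2) ≫ M.tHom (𝟙 Y1) g := by
  rw [← M.tHom_comp]; simp

lemma tHom_split' {X1 Y1 X2 Y2 : C} (f : X1 ⟶ Y1) (g : X2 ⟶ Y2) :
    M.tHom f g = M.tHom (𝟙 X1) g ≫ M.tHom f (𝟙 Y2) := by
  rw [← M.tHom_comp]; simp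

lemma tHom_id_comp {Z X1 Y1 Z1 : C} (f : X1 ⟶ Y1) (g : Y1 ⟶ Z1) :
    M.tHom (𝟙 Z) (f ≫ g) = M.tHom (𝟙 Z) f ≫ M.tHom (𝟙 Z) g := by
  rw [← M.tHom_comp]; simp

lemma tHom_comp_id {Z X1 Y1 Z1 : C} (f : X1 ⟶ Y1) (g : Y1 ⟶ Z1) :
    M.tHom (f ≫ g) (𝟙 Z) = M.tHom f (𝟙 Z) ≫ M.tHom g (𝟙 Z) := by
  rw [← M.tHom_comp]; simp

/-- pull an `eqToHom` (associator) across a right whiskering -/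
lemma assoc_push_r {X Y Z Z' : C} (f : Z ⟶ Z') :
    eqToHom (M.ten_assoc X Y Z).symm ≫ M.tHom (𝟙 (M.ten X Y)) f
      = M.tHom (𝟙 X) (M.tHom (𝟙 Y) f) ≫ eqToHom (M.ten_assoc X Y Z').symm := by
  have h := M.assoc_coh (𝟙 X) (𝟙 Y) f
  rw [M.tHom_id] at h
  rw [h]; simp

/-- `δ` commutes with `eqToHom`s coming from object equalities. -/
lemma delta_eqToHom {X X' Y Y' : C} (h : X = X') (h' : Y = Y') :
    bm.δ X Y ≫ eqToHom (by rw [h, h'] :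
        M.ten (B.obj X) (B.obj Y) = M.ten (B.obj X') (B.obj Y'))
      = eqToHom (by rw [h, h'] : B.obj (M.ten X Y) = B.obj (M.ten X' Y'))
          ≫ bm.δ X' Y' := by
  subst h; subst h'; simp

/-- The regrouping equation `(w ⊗ x) ⊗ (y ⊗ z) = w ⊗ ((x ⊗ y) ⊗ z)`. -/
def E1 (w x y z : C) : M.ten (M.ten w x) (M.ten y z) = M.ten w (M.ten (M.ten x y) z) :=
  (M.ten_assoc w x (M.ten y z)).trans (congrArg (M.ten w) (M.ten_assoc x y z).symm)

/-- Coassociativity, rearranged. -/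
lemma coassoc' (X Y Z : C) :
    bm.δ (M.ten X Y) Z ≫ M.tHom (bm.δ X Y) (𝟙 (B.obj Z))
      = eqToHom (congrArg B.obj (M.ten_assoc X Y Z))
          ≫ bm.δ X (M.ten Y Z) ≫ M.tHom (𝟙 (B.obj X)) (bm.δ Y Z)
          ≫ eqToHom (M.ten_assoc (B.obj X) (B.obj Y) (B.obj Z)).symm := by
  have h := congrArg
    (fun k => k ≫ eqToHom (M.ten_assoc (B.obj X) (B.obj Y) (B.obj Z)).symm)
    (bm.δ_coassoc X Y Z)
  simpa [eqToHom_map] using h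

/-- Coassociativity, rearranged the other way. -/
lemma coassoc'' (X Y Z : C) :
    bm.δ X (M.ten Y Z) ≫ M.tHom (𝟙 (B.obj X)) (bm.δ Y Z)
      = eqToHom (congrArg B.obj (M.ten_assoc X Y Z).symm)
          ≫ bm.δ (M.ten X Y) Z ≫ M.tHom (bm.δ X Y) (𝟙 (B.obj Z))
          ≫ eqToHom (M.ten_assoc (B.obj X) (B.obj Y) (B.obj Z)) := by
  have h := congrArg
    (fun k => eqToHom (congrArg B.obj (M.ten_assoc X Y Z).symm) ≫ k
        ≫ eqToHom (M.ten_assoc (B.obj X) (B.obj Y) (B.obj Z)))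
    (coassoc' M bm X Y Z)
  simpa using h.symm

/-- Key regrouping lemma: the fourfold splitting in grouping `(wx)(yz)` equals the
fourfold splitting in grouping `w((xy)z)`, up to `eqToHom`s. -/
lemma regroup (w x y z : C) :
    bm.δ (M.ten w x) (M.ten y z) ≫ M.tHom (bm.δ w x) (bm.δ y z)
      = eqToHom (congrArg B.obj (E1 M w x y z))
          ≫ bm.δ w (M.ten (M.ten x y) z)
          ≫ M.tHom (𝟙 (B.obj w)) (bm.δ (M.ten x y) z ≫ M.tHom (bm.δ x y) (𝟙 (B.obj z)))
          ≫ eqToHom (E1 M (B.obj w) (B.obj x) (B.obj y) (B.obj z)).symm := by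
  rw [tHom_split M (bm.δ w x) (bm.δ y z)]
  rw [← Category.assoc, coassoc' M bm w x (M.ten y z)]
  simp only [Category.assoc]
  rw [assoc_push_r M (bm.δ y z)]
  slice_lhs 3 4 => rw [← tHom_id_comp M]
  rw [coassoc'' M bm x y z]
  rw [tHom_id_comp M, tHom_id_comp M, tHom_id_comp M]
  rw [tHom_id_eq M, tHom_id_eq M]
  slice_lhs 2 3 => rw [delta_eqToHom M bm rfl (M.ten_assoc x y z).symm]
  simp only [tHom_id_comp M, Category.assoc, eqToHom_trans]
  simp [E1]

lemma tHom_comp_ir {X1 Y1 X2 Y2 Z2 : C} (f : X1 ⟶ Y1) (g : X2 ⟶ Y2) (k : Y2 ⟶ Z2) :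
    M.tHom f (g ≫ k) = M.tHom (𝟙 X1) g ≫ M.tHom f k := by
  rw [← M.tHom_comp]; simp

lemma tHom_comp_ri {X1 Y1 X2 Y2 Z2 : C} (f : X1 ⟶ Y1) (g : X2 ⟶ Y2) (k : Y2 ⟶ Z2) :
    M.tHom f (g ≫ k) = M.tHom f g ≫ M.tHom (𝟙 Y1) k := by
  rw [← M.tHom_comp]; simp

/-- Regrouping a fourfold tensor of morphisms. -/
lemma reassoc4 {x1 y1 x2 y2 x3 y3 x4 y4 : C}
    (f1 : x1 ⟶ y1) (f2 : x2 ⟶ y2) (f3 : x3 ⟶ y3) (f4 : x4 ⟶ y4) :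
    M.tHom (M.tHom f1 f2) (M.tHom f3 f4)
      = eqToHom (E1 M x1 x2 x3 x4)
          ≫ M.tHom f1 (M.tHom (M.tHom f2 f3) f4)
          ≫ eqToHom (E1 M y1 y2 y3 y4).symm := by
  rw [M.assoc_coh f1 f2 (M.tHom f3 f4)]
  have h' : M.tHom f2 (M.tHom f3 f4)
      = eqToHom (M.ten_assoc x2 x3 x4).symm ≫ M.tHom (M.tHom f2 f3) f4
          ≫ eqToHom (M.ten_assoc y2 y3 y4) := by
    rw [M.assoc_coh f2 f3 f4]; simp
  rw [h', tHom_comp_ir M, tHom_comp_ri M, tHom_id_eq M, tHom_id_eq M]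
  simp [E1]

end Helpers

/-- **Statement 16.** Let `(C, ⊗, 1)` be a strict monoidal category and `B` a bimonad on
`C`.  Suppose `R = {R_{b,c} : b ⊗ c → Bc ⊗ Bb}` is a natural transformation satisfying
`(μ ⊗ μ) ∘ B₂ ∘ BR = (μ ⊗ μ) ∘ R_{Bb,Bc} ∘ B₂` (axiom (57) of Bruguières–Virelizier).
Then `S := η ⊗ R ⊗ η` satisfies the R-matrix lifting diagram. -/
theorem S_satisfies_lift (M : StrictMonStr C) (B : CategoryTheory.Monad C)
    (bm : StrictOpmon M B)
    (R : ∀ b c : C, M.ten b c ⟶ M.ten (B.obj c) (B.obj b))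
    (R_nat : ∀ {b b' c c' : C} (f : b ⟶ b') (g : c ⟶ c'),
      M.tHom f g ≫ R b' c' = R b c ≫ M.tHom (B.map g) (B.map f))
    (h57 : ∀ b c : C,
      B.map (R b c) ≫ bm.δ (B.obj c) (B.obj b) ≫ M.tHom (B.μ.app c) (B.μ.app b)
        = bm.δ b c ≫ R (B.obj b) (B.obj c) ≫ M.tHom (B.μ.app c) (B.μ.app b))
    (a b c d : C) :
    B.map (Smap M B R a b c d)
        ≫ bm.δ (M.ten (B.obj a) (B.obj c)) (M.ten (B.obj b) (B.obj d))
        ≫ M.tHom (bm.δ (B.obj a) (B.obj c)) (bm.δ (B.obj b) (B.obj d))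
        ≫ M.tHom (M.tHom (B.μ.app a) (B.μ.app c)) (M.tHom (B.μ.app b) (B.μ.app d))
      = bm.δ (M.ten a b) (M.ten c d) ≫ M.tHom (bm.δ a b) (bm.δ c d)
          ≫ Smap M B R (B.obj a) (B.obj b) (B.obj c) (B.obj d)
          ≫ M.tHom (M.tHom (B.μ.app a) (B.μ.app c)) (M.tHom (B.μ.app b) (B.μ.app d)) := by
  have slot2 : B.map (M.tHom (R b c) (B.η.app d))
      ≫ (bm.δ (M.ten (B.obj c) (B.obj b)) (B.obj d)
          ≫ M.tHom (bm.δ (B.obj c) (B.obj b)) (𝟙 (B.obj (B.obj d))))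
      ≫ M.tHom (M.tHom (B.μ.app c) (B.μ.app b)) (B.μ.app d)
    = bm.δ (M.ten b c) d
        ≫ M.tHom (bm.δ b c ≫ R (B.obj b) (B.obj c)
            ≫ M.tHom (B.μ.app c) (B.μ.app b)) (𝟙 (B.obj d)) := by
    rw [← Category.assoc, ← Category.assoc, bm.δ_nat (R b c) (B.η.app d)]
    slice_lhs 2 3 => rw [← M.tHom_comp]
    slice_lhs 2 3 => rw [← M.tHom_comp]
    have e1 : (B.map (R b c) ≫ bm.δ (B.obj c) (B.obj b)) ≫ M.tHom (B.μ.app c) (B.μ.app b)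
        = bm.δ b c ≫ R (B.obj b) (B.obj c) ≫ M.tHom (B.μ.app c) (B.μ.app b) := by
      rw [Category.assoc, h57 b c]
    have e2 : (B.map (B.η.app d) ≫ 𝟙 (B.obj (B.obj d))) ≫ B.μ.app d = 𝟙 (B.obj d) := by
      simpa using B.right_unit d
    simp only [Functor.id_obj]
    rw [e1, e2]
  have slot2' : (bm.δ (M.ten b c) d ≫ M.tHom (bm.δ b c) (𝟙 (B.obj d)))
      ≫ M.tHom (R (B.obj b) (B.obj c)) (B.η.app (B.obj d))
      ≫ M.tHom (M.tHom (B.μ.app c) (B.μ.app b)) (B.μ.app d)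
    = bm.δ (M.ten b c) d
        ≫ M.tHom (bm.δ b c ≫ R (B.obj b) (B.obj c)
            ≫ M.tHom (B.μ.app c) (B.μ.app b)) (𝟙 (B.obj d)) := by
    slice_lhs 3 4 => rw [← M.tHom_comp]
    slice_lhs 2 3 => rw [← M.tHom_comp]
    simp [Monad.left_unit]
  trans (eqToHom (congrArg B.obj (E1 M a b c d))
      ≫ bm.δ a (M.ten (M.ten b c) d)
      ≫ M.tHom (𝟙 (B.obj a))
          (bm.δ (M.ten b c) d
            ≫ M.tHom (bm.δ b c ≫ R (B.obj b) (B.obj c)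
                ≫ M.tHom (B.μ.app c) (B.μ.app b)) (𝟙 (B.obj d)))
      ≫ eqToHom (E1 M (B.obj a) (B.obj c) (B.obj b) (B.obj d)).symm)
  · slice_lhs 2 3 => rw [regroup M bm]
    simp only [Smap, Functor.map_comp, eqToHom_map, Category.assoc, eqToHom_trans,
      eqToHom_trans_assoc, eqToHom_refl, Category.id_comp]
    slice_lhs 2 3 => rw [bm.δ_nat]
    rw [reassoc4 M (B.μ.app a) (B.μ.app c) (B.μ.app b) (B.μ.app d)]
    simp only [Category.assoc, eqToHom_trans, eqToHom_trans_assoc, eqToHom_refl, Category.id_comp]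
    slice_lhs 3 5 => rw [← M.tHom_comp, ← M.tHom_comp]
    rw [slot2]
    simp only [Category.id_comp, Monad.right_unit, Category.assoc, Functor.id_obj]
  · slice_rhs 1 2 => rw [regroup M bm]
    simp only [Smap, Category.assoc, eqToHom_trans, eqToHom_trans_assoc, eqToHom_refl,
      Category.id_comp]
    rw [reassoc4 M (B.μ.app a) (B.μ.app c) (B.μ.app b) (B.μ.app d)]
    simp only [Category.assoc, eqToHom_trans, eqToHom_trans_assoc, eqToHom_refl, Category.id_comp]
    slice_rhs 3 5 => rw [← M.tHom_comp, ← M.tHom_comp]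
    rw [slot2']
    simp only [Category.id_comp, Monad.left_unit, Category.assoc, Functor.id_obj]

end StrictDuo
end
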